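/- For positive reals α, β and integer n ≥ 1, the Beta-Shapley weights w(j) = n·Beta(j+β-1, n-j+α)/Beta(α,β) satisfy ∑_{j=1}^{n} C(n-1, j-1)·w(j) = n. -/

import Mathlib

open Finset

noncomputable def Beta (x y : ℝ) : ℝ := Real.Gamma x * Real.Gamma y / Real.Gamma (x + y)

/-!
Since `Γ(s + 1) = s Γ(s)`, the Beta function obeys the Pascal-type recurrence
`B(x + 1, y) + B(x, y + 1) = B(x, y)`. Exactly as Pascal's rule telescopes binomial sums, this
collapses `∑ₖ C(m, k) B(β + k, α + m - k)` to `B(β, α) = B(α, β)`; this is the discrete form of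
integrating the binomial expansion of `(t + (1 - t))^m` against `t^(β-1) (1-t)^(α-1)`.
Substituting `j = k + 1`, `m = n - 1` gives the normalization of the weights.
-/

theorem sum_antidiagonal_choose_nsmul_of_pascal {M : Type*} [AddCommMonoid M]
    (f : ℕ → ℕ → M) (hf : ∀ i j, f (i + 1) j + f i (j + 1) = f i j) (m : ℕ) :
    ∑ ij ∈ antidiagonal m, m.choose ij.1 • f ij.1 ij.2 = f 0 0 := by
  induction m with
  | zero => simp
  | succ m ih =>
    rw [sum_antidiagonal_choose_succ_nsmul, ← ih, ← sum_add_distrib]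
    refine sum_congr rfl fun ij hij => ?_
    rw [Nat.choose_symm_of_eq_add (mem_antidiagonal.mp hij).symm, ← smul_add, add_comm, hf]

theorem Beta_comm (x y : ℝ) : Beta x y = Beta y x := by
  rw [Beta, Beta, mul_comm, add_comm]

theorem Beta_pos {x y : ℝ} (hx : 0 < x) (hy : 0 < y) : 0 < Beta x y :=
  div_pos (mul_pos (Real.Gamma_pos_of_pos hx) (Real.Gamma_pos_of_pos hy))
    (Real.Gamma_pos_of_pos (add_pos hx hy))

theorem Beta_add_one_left_add_Beta_add_one_right {x y : ℝ} (hx : 0 < x) (hy : 0 < y) :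
    Beta (x + 1) y + Beta x (y + 1) = Beta x y := by
  have hxy : Real.Gamma (x + y) ≠ 0 := (Real.Gamma_pos_of_pos (add_pos hx hy)).ne'
  rw [Beta, Beta, Beta, add_right_comm, ← add_assoc, Real.Gamma_add_one hx.ne',
    Real.Gamma_add_one hy.ne', Real.Gamma_add_one (add_pos hx hy).ne']
  field_simp

theorem sum_antidiagonal_choose_mul_Beta {x y : ℝ} (hx : 0 < x) (hy : 0 < y) (m : ℕ) :
    ∑ ij ∈ antidiagonal m, (m.choose ij.1 : ℝ) * Beta (x + ij.1) (y + ij.2) = Beta x y := by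
  simpa [nsmul_eq_mul] using sum_antidiagonal_choose_nsmul_of_pascal
    (fun i j : ℕ => Beta (x + i) (y + j)) (fun i j => by
      push_cast
      rw [← add_assoc, ← add_assoc]
      exact Beta_add_one_left_add_Beta_add_one_right (by positivity) (by positivity)) m

theorem beta_shapley_weight_sum_general
    (α β : ℝ) (hα : 0 < α) (hβ : 0 < β) (n : ℕ) :
    ∑ j ∈ Finset.Icc 1 n,
      ((n - 1).choose (j - 1) : ℝ) *
        ((n : ℝ) * Beta ((j : ℝ) + β - 1) ((n : ℝ) - (j : ℝ) + α) / Beta α β) = n := by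
  cases n with
  | zero => simp
  | succ m =>
    have hbeta : ∑ k ∈ range (m + 1), (m.choose k : ℝ) * Beta (β + k) (α + (m - k : ℕ)) =
        Beta α β := by
      rw [← Nat.sum_antidiagonal_eq_sum_range_succ
          (fun i j => (m.choose i : ℝ) * Beta (β + i) (α + j)),
        sum_antidiagonal_choose_mul_Beta hβ hα, Beta_comm]
    rw [← Ico_add_one_right_eq_Icc, ← sum_Ico_add' _ 0 (m + 1) 1, ← range_eq_Ico]
    calc _ = (∑ k ∈ range (m + 1), (m.choose k : ℝ) * Beta (β + k) (α + (m - k : ℕ)))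
          * ((m + 1 : ℕ) / Beta α β) := by
          rw [sum_mul]
          refine sum_congr rfl fun k hk => ?_
          rw [Nat.add_sub_cancel, Nat.add_sub_cancel, Nat.cast_sub (mem_range_succ_iff.mp hk)]
          push_cast
          ring_nf
      _ = ((m + 1 : ℕ) : ℝ) := by
          rw [hbeta, mul_div_cancel₀ _ (Beta_pos hα hβ).ne']

theorem beta_shapley_weight_sum
    (α β : ℝ) (hα : 0 < α) (hβ : 0 < β) (n : ℕ) (hn : 1 ≤ n) :
    ∑ j ∈ Finset.Icc 1 n,
      ((n - 1).choose (j - 1) : ℝ) *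
        ((n : ℝ) * Beta ((j : ℝ) + β - 1) ((n : ℝ) - (j : ℝ) + α) / Beta α β) = n :=
  beta_shapley_weight_sum_general α β hα hβ n
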